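/- Let m be an integer with 3 ≤ m ≤ 2^{n+1}−2; set m′ = m if m is odd and m′ = m−1 if m is even, r′ = ⌊(m′+1)/4⌋, and d_i = ⌊log₂((m′−1)/(2i−1))⌋ for 1 ≤ i ≤ r′. Let A′ ⊆ A be the F₂[v,v^{−1}]-linear span of the basis elements γ_{(t₁,…,t_r)} with t_i = 0 for i > r′ and t_i < 2^{d_i} for i ≤ r′, and assume A′ is closed under multiplication (so A′ is a subalgebra, as holds for the dual K(n)*(SO_m)^∨). Then A′ contains no idempotents other than 0 and 1. -/

import Mathlib

open scoped Classical

noncomputable section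

/-- The base ring `F₂[v, v⁻¹]` of Laurent polynomials over `F₂`. -/
abbrev LL : Type := LaurentPolynomial (ZMod 2)

/-- `k_i = ⌊log₂((2^(n+1) - 2)/(2i - 1))⌋` (the index `i : Fin (2^(n-1))` corresponds
to `i + 1 ∈ {1, …, 2^(n-1)}`). -/
abbrev kfun (n : ℕ) (i : Fin (2 ^ (n - 1))) : ℕ :=
  Nat.log 2 ((2 ^ (n + 1) - 2) / (2 * (i : ℕ) + 1))

/-- Exponent tuples indexing the basis of `K(n)*(SO_{2^(n+1)-1})^∨`. -/
abbrev MIdx (n : ℕ) : Type := {t : Fin (2 ^ (n - 1)) → ℕ // ∀ i, t i < 2 ^ kfun n i}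

/-- The zero tuple (indexing the unit of the algebra). -/
def zeroIdx (n : ℕ) : MIdx n := ⟨fun _ => 0, fun _ => pow_pos (by norm_num) _⟩

/-- Given a tuple `t`, the tuple `u` with `u_{j(i)} = 1` for every `i` with `t_i ≠ 0` and
all other entries `0`. -/
def uIdx (n : ℕ) (hk : ∀ i, 1 ≤ kfun n i)
    (jf : Fin (2 ^ (n - 1)) → Fin (2 ^ (n - 1))) (t : MIdx n) : MIdx n :=
  ⟨fun l => if ∃ i, t.1 i ≠ 0 ∧ jf i = l then 1 else 0, by
    intro l
    have h2 : 1 < 2 ^ kfun n l := Nat.one_lt_two_pow_iff.mpr (by have := hk l; omega)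
    dsimp only
    split
    · exact h2
    · exact lt_trans Nat.zero_lt_one h2⟩

/-!
In characteristic 2 squaring is additive, so an idempotent `e = ∑ cₜ γₜ` equals `∑ cₜ² γₜ²`;
hence every index in the support of `e` is `u(t)` for an admissible `t` in the support. Such a
`t` is itself a value of `u`, so its entries are `0` or `1`, which forces `kᵢ = 1` wherever
`tᵢ ≠ 0`; as moreover `tᵢ = 0` for `i > r'`, the bound on `m` gives `j(i) < i`. Thus `u`
strictly lowers the weight `∑_{tᵢ ≠ 0} (i + 1)` of every nonzero such `t`, and a nonzero support
index of maximal weight cannot exist. So `e` is a scalar idempotent of the domain `F₂[v, v⁻¹]`.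
-/

theorem Module.Basis.exists_preimage_of_pow_eq_self {ι R A : Type*} [CommRing R] [CommRing A]
    [Algebra R A] {p : ℕ} [ExpChar A p] (b : Module.Basis ι R A) (u : ι → ι) (c : ι → R)
    (hpow : ∀ t, b t ^ p = c t • b (u t)) {e : A} (he : e ^ p = e) :
    ∀ w ∈ (b.repr e).support, ∃ t ∈ (b.repr e).support, c t ≠ 0 ∧ u t = w := by
  classical
  set S := (b.repr e).support
  have hexp : e = ∑ t ∈ S with c t ≠ 0, (b.repr e t ^ p * c t) • b (u t) := by
    conv_lhs => rw [← he, ← b.linearCombination_repr e, Finsupp.linearCombination_apply,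
      Finsupp.sum, sum_pow_char]
    rw [Finset.sum_filter_of_ne]
    · exact Finset.sum_congr rfl fun t _ => by rw [smul_pow, hpow, smul_smul]
    · intro t _ h hc
      simp [hc] at h
  have hmem : e ∈ Submodule.span R (b '' ((S.filter (c · ≠ 0)).image u)) := by
    rw [hexp]
    exact Submodule.sum_mem _ fun t ht =>
      Submodule.smul_mem _ _ (Submodule.subset_span ⟨u t, Finset.mem_image_of_mem u ht, rfl⟩)
  intro w hw
  simpa [and_assoc] using b.mem_span_image.mp hmem hw

theorem Finset.subset_singleton_of_surjOn_of_lt {ι : Type*} {S : Finset ι} {u : ι → ι} {z : ι}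
    (μ : ι → ℕ) (hz : u z = z) (hS : Set.SurjOn u S S) (hμ : ∀ t ∈ S, t ≠ z → μ (u t) < μ t) :
    S ⊆ {z} := by
  classical
  by_contra hne
  rw [Finset.not_subset] at hne
  obtain ⟨w, hw, hwmax⟩ := (S.filter (· ≠ z)).exists_max_image μ (by
    simpa [Finset.filter_nonempty_iff] using hne)
  rw [Finset.mem_filter] at hw
  obtain ⟨t, ht, rfl⟩ := hS hw.1
  have htz : t ≠ z := by rintro rfl; exact hw.2 hz
  exact (hμ t ht htz).not_ge (hwmax t (Finset.mem_filter.mpr ⟨ht, htz⟩))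

theorem Module.Basis.eq_zero_or_eq_one_of_support_subset_singleton {ι R A : Type*} [CommRing R]
    [NoZeroDivisors R] [CommRing A] [Algebra R A] (b : Module.Basis ι R A) {z : ι}
    (hz : b z = 1) {e : A} (hS : (b.repr e).support ⊆ {z}) (he : e ^ 2 = e) : e = 0 ∨ e = 1 := by
  set c := b.repr e z
  have hec : e = c • b z := by
    rw [← b.repr_symm_single, ← Finsupp.support_subset_singleton.mp hS,
      LinearEquiv.symm_apply_apply]
  have hc : c * c = c := by
    have hsq : e ^ 2 = (c * c) • b z := by rw [hec, sq, smul_mul_smul_comm, hz, one_mul]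
    simpa using congrArg (fun x => b.repr x z) (hsq.symm.trans (he.trans hec))
  rcases IsIdempotentElem.iff_eq_zero_or_one.mp hc with h | h
  · exact Or.inl (by rw [hec, h, zero_smul])
  · exact Or.inr (by rw [hec, h, one_smul, hz])

theorem charP_of_algebra_of_prime (R : Type*) {A : Type*} [CommRing R] [Ring A] [Nontrivial A]
    [Algebra R A] {p : ℕ} (hp : p.Prime) [CharP R p] : CharP A p :=
  (CharP.charP_iff_prime_eq_zero hp).mpr <| by
    rw [← map_natCast (algebraMap R A), CharP.cast_eq_zero, map_zero]

def idxSupport {n : ℕ} (t : MIdx n) : Finset (Fin (2 ^ (n - 1))) :=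
  Finset.univ.filter fun i => t.1 i ≠ 0

def idxWeight {n : ℕ} (t : MIdx n) : ℕ :=
  ∑ i ∈ idxSupport t, ((i : ℕ) + 1)

theorem idxSupport_nonempty_iff {n : ℕ} {t : MIdx n} :
    (idxSupport t).Nonempty ↔ t ≠ zeroIdx n := by
  simp [idxSupport, Finset.filter_nonempty_iff, zeroIdx, Subtype.ext_iff, funext_iff]

section uIdx

variable {n : ℕ} {hk : ∀ i, 1 ≤ kfun n i} {jf : Fin (2 ^ (n - 1)) → Fin (2 ^ (n - 1))}

theorem uIdx_apply_le_one (t : MIdx n) (l : Fin (2 ^ (n - 1))) : (uIdx n hk jf t).1 l ≤ 1 := by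
  simp only [uIdx]
  split <;> omega

theorem idxSupport_uIdx (t : MIdx n) : idxSupport (uIdx n hk jf t) = (idxSupport t).image jf := by
  ext l
  simp [idxSupport, uIdx]

theorem uIdx_zeroIdx : uIdx n hk jf (zeroIdx n) = zeroIdx n := by
  ext l
  simp [uIdx, zeroIdx]

theorem idxWeight_uIdx_lt {t : MIdx n} (ht : t ≠ zeroIdx n)
    (hjf : ∀ i ∈ idxSupport t, (jf i : ℕ) < i) : idxWeight (uIdx n hk jf t) < idxWeight t :=
  calc idxWeight (uIdx n hk jf t) ≤ ∑ i ∈ idxSupport t, ((jf i : ℕ) + 1) := by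
        rw [idxWeight, idxSupport_uIdx]
        exact Finset.sum_image_le_of_nonneg fun _ _ => Nat.zero_le _
    _ < idxWeight t :=
        Finset.sum_lt_sum_of_nonempty (idxSupport_nonempty_iff.mpr ht) fun i hi => by
          have := hjf i hi
          omega

end uIdx

-- Here `j = 2i + 1 - 2^(n-1)`, and `4(i + 1) ≤ m' + 1 ≤ 2^(n+1) - 2` forces `i + 2 ≤ 2^(n-1)`.
theorem lt_of_two_mul_succ_add_two_pow_eq {n m i j : ℕ} (hn : 1 ≤ n) (hm : m ≤ 2 ^ (n + 1) - 2)
    (hi : i + 1 ≤ ((if m % 2 = 1 then m else m - 1) + 1) / 4)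
    (hj : 2 * (j + 1) + 2 ^ n = (2 * i + 1) * 2 ^ 1 + 2) : j < i := by
  obtain ⟨k, rfl⟩ : ∃ k, n = k + 1 := ⟨n - 1, by omega⟩
  rw [pow_succ] at hj
  rw [pow_succ, pow_succ] at hm
  split_ifs at hi <;> omega

theorem idxWeight_uIdx_lt_of_le_rank {n m : ℕ} (hn : 1 ≤ n) (hk : ∀ i, 1 ≤ kfun n i)
    {jf : Fin (2 ^ (n - 1)) → Fin (2 ^ (n - 1))}
    (hjf : ∀ i, 2 * ((jf i : ℕ) + 1) + 2 ^ n = (2 * (i : ℕ) + 1) * 2 ^ kfun n i + 2)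
    (hm : m ≤ 2 ^ (n + 1) - 2) {t : MIdx n} (ht0 : t ≠ zeroIdx n) (ht1 : ∀ i, t.1 i ≤ 1)
    (hadm : ∀ i, t.1 i = 0 ∨ t.1 i = 2 ^ (kfun n i - 1))
    (hrank : ∀ i : Fin (2 ^ (n - 1)),
      ((if m % 2 = 1 then m else m - 1) + 1) / 4 < (i : ℕ) + 1 → t.1 i = 0) :
    idxWeight (uIdx n hk jf t) < idxWeight t := by
  refine idxWeight_uIdx_lt ht0 fun i hi => ?_
  have hti : t.1 i ≠ 0 := (Finset.mem_filter.mp hi).2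
  have hki : kfun n i = 1 := by
    have hpow : 2 ^ (kfun n i - 1) = 1 := by
      have := ht1 i
      rcases hadm i with h | h <;> omega
    have := hk i
    rw [Nat.pow_eq_one] at hpow
    omega
  have hji := hjf i
  rw [hki] at hji
  exact lt_of_two_mul_succ_add_two_pow_eq hn hm (not_lt.mp fun h => hti (hrank i h)) hji

theorem stmt5_general (n : ℕ) (hn : 1 ≤ n) (hk : ∀ i, 1 ≤ kfun n i)
    (jf : Fin (2 ^ (n - 1)) → Fin (2 ^ (n - 1)))
    (hjf : ∀ i, 2 * ((jf i : ℕ) + 1) + 2 ^ n = (2 * (i : ℕ) + 1) * 2 ^ kfun n i + 2)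
    (A : Type) [CommRing A] [Algebra LL A]
    (b : Module.Basis (MIdx n) LL A)
    (hone : b (zeroIdx n) = 1)
    (hsq : ∀ t : MIdx n, (∀ i, t.1 i = 0 ∨ t.1 i = 2 ^ (kfun n i - 1)) →
      b t ^ 2 = (LaurentPolynomial.T 1 : LL) ^
          (Finset.univ.filter fun i => t.1 i ≠ 0).card • b (uIdx n hk jf t))
    (hsq0 : ∀ t : MIdx n, ¬ (∀ i, t.1 i = 0 ∨ t.1 i = 2 ^ (kfun n i - 1)) →
      b t ^ 2 = 0)
    (m : ℕ) (hm : m ≤ 2 ^ (n + 1) - 2)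
    (A' : Submodule LL A)
    (hA' : A' = Submodule.span LL (⇑b '' {t : MIdx n |
      ∀ i : Fin (2 ^ (n - 1)),
        (((if m % 2 = 1 then m else m - 1) + 1) / 4 < (i : ℕ) + 1 → t.1 i = 0) ∧
        ((i : ℕ) + 1 ≤ ((if m % 2 = 1 then m else m - 1) + 1) / 4 →
          t.1 i < 2 ^ Nat.log 2
            (((if m % 2 = 1 then m else m - 1) - 1) / (2 * (i : ℕ) + 1)))})) :
    ∀ e ∈ A', e ^ 2 = e → e = 0 ∨ e = 1 := by
  intro e heA' he
  have : Nontrivial A := nontrivial_of_ne _ _ (hone ▸ b.ne_zero (zeroIdx n))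
  have : CharP LL 2 := charP_of_algebra_of_prime (ZMod 2) Nat.prime_two
  have : CharP A 2 := charP_of_algebra_of_prime LL Nat.prime_two
  have : ExpChar A 2 := ExpChar.prime Nat.prime_two
  set S := (b.repr e).support
  set Adm : MIdx n → Prop := fun t => ∀ i, t.1 i = 0 ∨ t.1 i = 2 ^ (kfun n i - 1)
  set c : MIdx n → LL := fun t =>
    if Adm t then (LaurentPolynomial.T 1 : LL) ^ (Finset.univ.filter fun i => t.1 i ≠ 0).card
    else 0
  have hadm : ∀ t, c t ≠ 0 → Adm t := fun t hct => by_contra fun h => hct (if_neg h)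
  have hpow : ∀ t, b t ^ 2 = c t • b (uIdx n hk jf t) := fun t => by
    by_cases h : Adm t
    · simp only [c, if_pos h, hsq t h]
    · simp only [c, if_neg h, hsq0 t h, zero_smul]
  have hpre := b.exists_preimage_of_pow_eq_self _ c hpow he
  have hS := b.mem_span_image.mp (hA' ▸ heA')
  have hT : S.filter Adm ⊆ {zeroIdx n} := by
    refine Finset.subset_singleton_of_surjOn_of_lt (u := uIdx n hk jf) idxWeight uIdx_zeroIdx
      ?_ ?_
    · intro w hw
      obtain ⟨t, ht, hct, rfl⟩ := hpre w (Finset.mem_filter.mp hw).1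
      exact ⟨t, Finset.mem_filter.mpr ⟨ht, hadm t hct⟩, rfl⟩
    · intro t ht ht0
      obtain ⟨htS, htAdm⟩ := Finset.mem_filter.mp ht
      obtain ⟨s, -, -, rfl⟩ := hpre _ htS
      exact idxWeight_uIdx_lt_of_le_rank hn hk hjf hm ht0 (uIdx_apply_le_one s) htAdm
        fun i => (hS htS i).1
  refine b.eq_zero_or_eq_one_of_support_subset_singleton hone (fun w hw => ?_) he
  obtain ⟨t, ht, hct, rfl⟩ := hpre w hw
  rw [Finset.mem_singleton.mp (hT (Finset.mem_filter.mpr ⟨ht, hadm t hct⟩)), uIdx_zeroIdx]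
  exact Finset.mem_singleton_self _

/-- **No nontrivial idempotents in `K(n)*(SO_m)^∨` for `m ≤ 2^(n+1) - 2`**
(Propositions `idem-small` and `idem-answer`, Corollary `cl-idem-answer`).
Let `A` be the algebra `K(n)*(SO_{2^(n+1)-1})^∨` of statement `idem-answer`, and for
`3 ≤ m ≤ 2^(n+1) - 2` put `m' = m` if `m` is odd and `m' = m - 1` otherwise,
`r' = ⌊(m'+1)/4⌋` and `d_i = ⌊log₂((m'-1)/(2i-1))⌋`.  Let `A' ⊆ A` be the
`F₂[v,v⁻¹]`-linear span of the basis elements `γ_t` with `t_i = 0` for `i > r'` and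
`t_i < 2^(d_i)` for `i ≤ r'`; assume `A'` is closed under multiplication.  Then `A'`
contains no idempotents other than `0` and `1`. -/
theorem stmt5 (n : ℕ) (hn : 1 ≤ n) (hk : ∀ i, 1 ≤ kfun n i)
    (jf : Fin (2 ^ (n - 1)) → Fin (2 ^ (n - 1)))
    (hjf : ∀ i, 2 * ((jf i : ℕ) + 1) + 2 ^ n = (2 * (i : ℕ) + 1) * 2 ^ kfun n i + 2)
    (hjinj : Function.Injective jf)
    (A : Type) [CommRing A] [Algebra LL A]
    (b : Module.Basis (MIdx n) LL A)
    (hone : b (zeroIdx n) = 1)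
    (hsq : ∀ t : MIdx n, (∀ i, t.1 i = 0 ∨ t.1 i = 2 ^ (kfun n i - 1)) →
      b t ^ 2 = (LaurentPolynomial.T 1 : LL) ^
          (Finset.univ.filter fun i => t.1 i ≠ 0).card • b (uIdx n hk jf t))
    (hsq0 : ∀ t : MIdx n, ¬ (∀ i, t.1 i = 0 ∨ t.1 i = 2 ^ (kfun n i - 1)) →
      b t ^ 2 = 0)
    (m : ℕ) (hm3 : 3 ≤ m) (hm : m ≤ 2 ^ (n + 1) - 2)
    (A' : Submodule LL A)
    (hA' : A' = Submodule.span LL (⇑b '' {t : MIdx n |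
      ∀ i : Fin (2 ^ (n - 1)),
        (((if m % 2 = 1 then m else m - 1) + 1) / 4 < (i : ℕ) + 1 → t.1 i = 0) ∧
        ((i : ℕ) + 1 ≤ ((if m % 2 = 1 then m else m - 1) + 1) / 4 →
          t.1 i < 2 ^ Nat.log 2
            (((if m % 2 = 1 then m else m - 1) - 1) / (2 * (i : ℕ) + 1)))}))
    (hA'mul : ∀ x ∈ A', ∀ y ∈ A', x * y ∈ A') :
    ∀ e ∈ A', e ^ 2 = e → e = 0 ∨ e = 1 :=
  stmt5_general n hn hk jf hjf A b hone hsq hsq0 m hm A' hA'
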